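/- Let W_1, …, W_k be i.i.d. noncentral chi-squared with 1 degree of freedom and noncentrality λ ≥ 0, and let M_k = min(W_1, …, W_k). Then lim_{k→∞} k²·E[M_k] = π·e^{λ}. -/

import Mathlib

/-!
Let `F x = P(|Z| ≤ x)` with `Z ~ N(√λ, 1)`, so that `P(M_k > t) = (1 - F √t) ^ k`. The
substitution `t = s / k²` turns `k² E[M_k]` into `∫₀^∞ (1 - F (√s / k)) ^ k ds`. Since `F 0 = 0`
and `F' 0 = 2 φ(√λ) =: c`, the integrand tends to `exp (-c √s)`; it is dominated by
`exp (-B √s)` because `1 - F x ≤ exp (-B x)` (from `F x ≥ const · x` near `0` and a Chernoff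
bound far out). Hence the limit is `∫₀^∞ exp (-c √s) ds = 2 / c² = π e^λ`.
-/

open MeasureTheory ProbabilityTheory Filter Real Set Topology

lemma hasDerivAt_integral_neg_self {f : ℝ → ℝ} (hf : Continuous f) (x : ℝ) :
    HasDerivAt (fun x => ∫ u in (-x)..x, f u) (f x + f (-x)) x := by
  have hsplit : (fun x => ∫ u in (-x)..x, f u) =
      fun x => (∫ u in (0 : ℝ)..x, f u) - ∫ u in (0 : ℝ)..(-x), f u := by
    ext x
    rw [intervalIntegral.integral_interval_sub_left (hf.intervalIntegrable _ _)
      (hf.intervalIntegrable _ _)]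
  rw [hsplit]
  have hneg := (hf.integral_hasStrictDerivAt 0 (-x)).hasDerivAt.comp x (hasDerivAt_neg x)
  exact ((hf.integral_hasStrictDerivAt 0 x).hasDerivAt.sub hneg).congr_deriv (by ring)

lemma tendsto_one_sub_apply_div_pow {F : ℝ → ℝ} {c : ℝ} (hF0 : F 0 = 0)
    (hF : HasDerivAt F c 0) (x : ℝ) :
    Tendsto (fun k : ℕ => (1 - F (x / k)) ^ k) atTop (𝓝 (exp (-(c * x)))) := by
  suffices h : Tendsto (fun k : ℕ => k * F (x / k)) atTop (𝓝 (c * x)) by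
    simpa [sub_eq_add_neg] using Real.tendsto_one_add_pow_exp_of_tendsto (g := fun k => -F (x / k))
      (by simpa using h.neg)
  rcases eq_or_ne x 0 with rfl | hx
  · simp [hF0]
  have hdiv : Tendsto (fun k : ℕ => x / k) atTop (𝓝[≠] 0) :=
    tendsto_nhdsWithin_iff.2 ⟨tendsto_const_div_atTop_nhds_zero_nat x,
      (eventually_ge_atTop 1).mono fun k hk => div_ne_zero hx (by positivity)⟩
  refine ((hF.tendsto_slope_zero.comp hdiv).mul_const x).congr' ?_
  filter_upwards [eventually_ge_atTop 1] with k hk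
  have : (k : ℝ) ≠ 0 := by positivity
  simp only [zero_add, hF0, sub_zero, smul_eq_mul, Function.comp_apply, inv_div]
  field_simp

lemma integrableOn_exp_neg_mul_sqrt {b : ℝ} (hb : 0 < b) :
    IntegrableOn (fun s => exp (-(b * √s))) (Ioi 0) := by
  refine (integrableOn_rpow_mul_exp_neg_mul_rpow (s := 0) (p := 1 / 2) (by norm_num)
    (by norm_num) hb).congr_fun (fun s _ => ?_) measurableSet_Ioi
  simp [sqrt_eq_rpow]

lemma integral_exp_neg_mul_sqrt {b : ℝ} (hb : 0 < b) :
    ∫ s in Ioi 0, exp (-(b * √s)) = 2 / b ^ 2 := by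
  have h := integral_exp_neg_mul_rpow (p := 1 / 2) (by norm_num) hb
  simp only [neg_mul, ← sqrt_eq_rpow] at h
  rw [h, show (1 : ℝ) / (1 / 2) + 1 = (2 : ℕ) + 1 by norm_num, Gamma_nat_eq_factorial,
    show (-1 : ℝ) / (1 / 2) = ((2 : ℕ) : ℝ) * (-1) by norm_num, rpow_mul hb.le, rpow_natCast,
    rpow_neg_one]
  simp [div_eq_mul_inv, mul_comm]

lemma sq_mul_integral_one_sub_pow_eq {F : ℝ → ℝ} {k : ℕ} (hk : k ≠ 0) :
    (k : ℝ) ^ 2 * ∫ t in Ioi 0, (1 - F √t) ^ k = ∫ s in Ioi 0, (1 - F (√s / k)) ^ k := by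
  have hk2 : (0 : ℝ) < (k : ℝ) ^ 2 := by positivity
  have h := integral_comp_mul_left_Ioi (fun t => (1 - F √t) ^ k) 0 (inv_pos.2 hk2)
  rw [mul_zero, inv_inv, smul_eq_mul] at h
  rw [← h]
  refine setIntegral_congr_fun measurableSet_Ioi fun s _ => ?_
  simp [sqrt_mul', sqrt_inv, div_eq_mul_inv, mul_comm]

theorem tendsto_sq_mul_integral_one_sub_pow {F : ℝ → ℝ} {c B : ℝ} (hFm : Measurable F)
    (hF0 : F 0 = 0) (hF : HasDerivAt F c 0) (hF1 : ∀ x, 0 ≤ x → F x ≤ 1) (hB : 0 < B)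
    (hFB : ∀ x, 0 ≤ x → 1 - F x ≤ exp (-(B * x))) :
    Tendsto (fun k : ℕ => (k : ℝ) ^ 2 * ∫ t in Ioi 0, (1 - F √t) ^ k) atTop
      (𝓝 (∫ s in Ioi 0, exp (-(c * √s)))) := by
  have hbound : ∀ k : ℕ, k ≠ 0 → ∀ s, ‖(1 - F (√s / k)) ^ k‖ ≤ exp (-(B * √s)) := by
    intro k hk s
    have hx : 0 ≤ √s / k := by positivity
    rw [norm_pow, Real.norm_of_nonneg (sub_nonneg.2 (hF1 _ hx))]
    calc (1 - F (√s / k)) ^ k ≤ exp (-(B * (√s / k))) ^ k :=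
          pow_le_pow_left₀ (sub_nonneg.2 (hF1 _ hx)) (hFB _ hx) k
      _ = exp (-(B * √s)) := by
          rw [← exp_nat_mul]
          field_simp
  refine (tendsto_integral_filter_of_dominated_convergence
    (F := fun (k : ℕ) s => (1 - F (√s / k)) ^ k) _ ?_ ?_
    (integrableOn_exp_neg_mul_sqrt hB) ?_).congr' ?_
  · exact .of_forall fun k => ((measurable_const.sub
      (hFm.comp (Real.continuous_sqrt.measurable.div_const _))).pow_const k).aestronglyMeasurable
  · filter_upwards [eventually_ne_atTop 0] with k hk
    exact .of_forall (hbound k hk)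
  · exact .of_forall fun s => tendsto_one_sub_apply_div_pow hF0 hF √s
  · filter_upwards [eventually_ne_atTop 0] with k hk
    exact (sq_mul_integral_one_sub_pow_eq hk).symm

lemma gaussianReal_real_Icc (μ : ℝ) {v : NNReal} (hv : v ≠ 0) {a b : ℝ} (hab : a ≤ b) :
    (gaussianReal μ v).real (Icc a b) = ∫ u in a..b, gaussianPDFReal μ v u := by
  rw [measureReal_def, gaussianReal_apply_eq_integral μ hv, ENNReal.toReal_ofReal
    (setIntegral_nonneg measurableSet_Icc fun u _ => gaussianPDFReal_nonneg μ v u),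
    integral_Icc_eq_integral_Ioc, intervalIntegral.integral_of_le hab]

lemma map_sq_add_const_gaussianReal_Iic (μ : ℝ) {v : NNReal} {t : ℝ} (ht : 0 ≤ t) :
    (gaussianReal 0 v).map (fun g => (g + μ) ^ 2) (Iic t) = gaussianReal μ v (Icc (-√t) √t) := by
  have hmap : (gaussianReal 0 v).map (fun g => (g + μ) ^ 2)
      = (gaussianReal μ v).map (fun u => u ^ 2) := by
    have hshift := gaussianReal_map_add_const (μ := 0) (v := v) μ
    rw [zero_add] at hshift
    rw [← hshift, Measure.map_map (by fun_prop) (by fun_prop)]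
    rfl
  rw [hmap, Measure.map_apply (by fun_prop) measurableSet_Iic]
  congr 1
  ext u
  simp [Real.sq_le ht]

lemma one_sub_gaussianReal_real_Icc_le (μ x : ℝ) :
    1 - (gaussianReal μ 1).real (Icc (-x) x) ≤ 2 * exp (|μ| + 1 / 2 - x) := by
  have hupper := measure_ge_le_exp_mul_mgf (X := id) (μ := gaussianReal μ 1) x zero_le_one
    (integrable_exp_mul_gaussianReal 1)
  have hlower := measure_le_le_exp_mul_mgf (X := id) (μ := gaussianReal μ 1) (-x)
    (neg_nonpos.2 zero_le_one) (integrable_exp_mul_gaussianReal (-1))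
  rw [mgf_id_gaussianReal] at hupper hlower
  have hcover : (Icc (-x) x)ᶜ ⊆ {u | x ≤ id u} ∪ {u | id u ≤ -x} := by
    intro u hu
    simp only [mem_compl_iff, mem_Icc, not_and_or, not_le] at hu
    rcases hu with hu | hu
    · exact Or.inr hu.le
    · exact Or.inl hu.le
  calc 1 - (gaussianReal μ 1).real (Icc (-x) x) = (gaussianReal μ 1).real (Icc (-x) x)ᶜ :=
        (probReal_compl_eq_one_sub measurableSet_Icc).symm
    _ ≤ (gaussianReal μ 1).real {u | x ≤ id u} + (gaussianReal μ 1).real {u | id u ≤ -x} :=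
        (measureReal_mono hcover).trans (measureReal_union_le _ _)
    _ ≤ exp (-1 * x) * exp (μ * 1 + 1 * 1 ^ 2 / 2)
        + exp (-(-1) * -x) * exp (μ * (-1) + 1 * (-1) ^ 2 / 2) := add_le_add hupper hlower
    _ ≤ 2 * exp (|μ| + 1 / 2 - x) := by
        rw [← exp_add, ← exp_add]
        have h1 : exp (-1 * x + (μ * 1 + 1 * 1 ^ 2 / 2)) ≤ exp (|μ| + 1 / 2 - x) :=
          exp_le_exp.2 (by linarith [le_abs_self μ])
        have h2 : exp (-(-1) * -x + (μ * (-1) + 1 * (-1) ^ 2 / 2)) ≤ exp (|μ| + 1 / 2 - x) :=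
          exp_le_exp.2 (by linarith [neg_abs_le μ])
        linarith

lemma gaussianPDFReal_le_of_abs_le (μ : ℝ) {v : NNReal} {u y : ℝ} (h : |u - μ| ≤ |y|) :
    gaussianPDFReal 0 v y ≤ gaussianPDFReal μ v u := by
  have hsq : (u - μ) ^ 2 ≤ y ^ 2 := by
    simpa only [sq_abs] using pow_le_pow_left₀ (abs_nonneg _) h 2
  simp only [gaussianPDFReal, sub_zero]
  gcongr

lemma mul_le_integral_gaussianPDFReal (μ : ℝ) {x X : ℝ} (hx : 0 ≤ x) (hxX : x ≤ X) :
    2 * gaussianPDFReal 0 1 (X + |μ|) * x ≤ ∫ u in (-x)..x, gaussianPDFReal μ 1 u := by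
  have hconst : ∫ _ in (-x)..x, gaussianPDFReal 0 1 (X + |μ|) =
      2 * gaussianPDFReal 0 1 (X + |μ|) * x := by
    simp only [intervalIntegral.integral_const, smul_eq_mul]
    ring
  rw [← hconst]
  refine intervalIntegral.integral_mono_on (by linarith) intervalIntegrable_const
    (integrable_gaussianPDFReal μ 1).intervalIntegrable fun u hu => ?_
  apply gaussianPDFReal_le_of_abs_le
  rw [abs_of_nonneg (add_nonneg (hx.trans hxX) (abs_nonneg μ))]
  calc |u - μ| ≤ |u| + |μ| := abs_sub _ _
    _ ≤ X + |μ| := by gcongr; exact abs_le.2 ⟨by linarith [hu.1], by linarith [hu.2]⟩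

lemma exists_one_sub_integral_gaussianPDFReal_le_exp (μ : ℝ) :
    ∃ B > 0, ∀ x, 0 ≤ x → 1 - ∫ u in (-x)..x, gaussianPDFReal μ 1 u ≤ exp (-(B * x)) := by
  -- beyond `X`, the Chernoff tail `2 e^(|μ| + 1/2 - x)` is below `e^(-x/2)` because `2 ≤ e`
  set X := 2 * |μ| + 3
  set A := 2 * gaussianPDFReal 0 1 (X + |μ|)
  have hA : 0 < A := mul_pos two_pos (gaussianPDFReal_pos _ _ _ one_ne_zero)
  refine ⟨min A (1 / 2), lt_min hA one_half_pos, fun x hx => ?_⟩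
  rcases le_total x X with hxX | hXx
  · calc 1 - ∫ u in (-x)..x, gaussianPDFReal μ 1 u
        ≤ exp (-∫ u in (-x)..x, gaussianPDFReal μ 1 u) := one_sub_le_exp_neg _
      _ ≤ exp (-(min A (1 / 2) * x)) := by
        gcongr
        exact (mul_le_mul_of_nonneg_right (min_le_left _ _) hx).trans
          (mul_le_integral_gaussianPDFReal μ hx hxX)
  · rw [← gaussianReal_real_Icc μ one_ne_zero (by linarith)]
    calc 1 - (gaussianReal μ 1).real (Icc (-x) x) ≤ 2 * exp (|μ| + 1 / 2 - x) :=
          one_sub_gaussianReal_real_Icc_le μ x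
      _ ≤ exp 1 * exp (|μ| + 1 / 2 - x) := by
          gcongr
          linarith [add_one_le_exp 1]
      _ ≤ exp (-(min A (1 / 2) * x)) := by
          rw [← exp_add]
          gcongr
          nlinarith [min_le_right A (1 / 2)]

lemma continuous_gaussianPDFReal (μ : ℝ) (v : NNReal) : Continuous (gaussianPDFReal μ v) := by
  rw [gaussianPDFReal_def]
  fun_prop

lemma two_div_sq_two_mul_gaussianPDFReal_zero (μ : ℝ) :
    2 / (2 * gaussianPDFReal μ 1 0) ^ 2 = π * exp (μ ^ 2) := by
  have h2π : √(2 * π) ^ 2 = 2 * π := sq_sqrt (by positivity)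
  have hexp : exp (-(0 - μ) ^ 2 / 2) ^ 2 = (exp (μ ^ 2))⁻¹ := by
    rw [← exp_nat_mul, ← exp_neg]
    ring_nf
  simp only [gaussianPDFReal, NNReal.coe_one, mul_one, mul_pow, inv_pow, h2π, hexp]
  field_simp

/-- Best-of-`k` limit: if `W₁,…,W_k` are i.i.d. noncentral chi-squared with one
degree of freedom and noncentrality `λ ≥ 0` (CDF `G`), then the minimum
`M_k` is nonnegative, so `E[M_k] = ∫₀^∞ P(M_k > t) dt = ∫₀^∞ (1 − G(t))^k dt`,
and `lim_{k→∞} k² E[M_k] = π e^{λ}`. -/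
theorem stmt_13 (lam : ℝ) (hlam : 0 ≤ lam)
    (G : ℝ → ℝ)
    (hG : ∀ x : ℝ, G x =
      (((gaussianReal 0 1).map
          (fun g : ℝ => (g + Real.sqrt lam) ^ 2)) (Set.Iic x)).toReal) :
    Tendsto (fun k : ℕ =>
        (k : ℝ) ^ 2 * ∫ t in Set.Ioi (0 : ℝ), (1 - G t) ^ k)
      atTop (nhds (Real.pi * Real.exp lam)) := by
  set r := √lam
  set F : ℝ → ℝ := fun x => ∫ u in (-x)..x, gaussianPDFReal r 1 u
  have hF : ∀ x, HasDerivAt F (gaussianPDFReal r 1 x + gaussianPDFReal r 1 (-x)) x :=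
    hasDerivAt_integral_neg_self (continuous_gaussianPDFReal r 1)
  have hF_real : ∀ x, 0 ≤ x → F x = (gaussianReal r 1).real (Icc (-x) x) := fun x hx =>
    (gaussianReal_real_Icc r one_ne_zero (by linarith)).symm
  have hGF : ∀ t, 0 ≤ t → G t = F √t := fun t ht => by
    rw [hG, map_sq_add_const_gaussianReal_Iic r ht, hF_real _ (sqrt_nonneg t), measureReal_def]
  obtain ⟨B, hB, hFB⟩ := exists_one_sub_integral_gaussianPDFReal_le_exp r
  have hlim := tendsto_sq_mul_integral_one_sub_pow
    (Differentiable.continuous fun x => (hF x).differentiableAt).measurable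
    (by simp [F]) (hF 0)
    (fun x hx => (hF_real x hx).trans_le measureReal_le_one) hB hFB
  rw [neg_zero, ← two_mul, integral_exp_neg_mul_sqrt
    (mul_pos two_pos (gaussianPDFReal_pos _ _ _ one_ne_zero)),
    two_div_sq_two_mul_gaussianPDFReal_zero, sq_sqrt hlam] at hlim
  refine hlim.congr fun k => ?_
  congr 1
  exact setIntegral_congr_fun measurableSet_Ioi fun t ht => by rw [hGF t (le_of_lt ht)]
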